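/- Let P and Q be n×n row-stochastic matrices with all entries strictly positive, and let p = q = (1/n,…,1/n) be the uniform initial distribution. Let p^{(m)} and q^{(m)} be the distributions of length-m trajectories of the Markov chains (P, p) and (Q, q). Then D(p^{(m)}‖q^{(m)}) = p(I + P + P² + … + P^{m-2})V + D(p‖q), where V ∈ ℝⁿ has entries Vᵢ = D(P(i)‖Q(i)), the KL divergence between the i-th rows. -/
import Mathlib


open Matrix

/-- Probability of a length-`m` trajectory `s` under a Markov chain with
transition matrix `P` and initial distribution `p`. -/
noncomputable def trajProb {n : ℕ} (P : Matrix (Fin n) (Fin n) ℝ)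
    (p : Fin n → ℝ) (m : ℕ) (s : Fin m → Fin n) : ℝ :=
  if h : 0 < m then
    p (s ⟨0, h⟩) * ∏ k : Fin (m - 1),
      P (s ⟨k, lt_of_lt_of_le k.isLt (Nat.sub_le m 1)⟩)
        (s ⟨(k : ℕ) + 1, Nat.add_lt_of_lt_sub k.isLt⟩)
  else 1


lemma trajProb_succ {n N : ℕ} (P : Matrix (Fin n) (Fin n) ℝ) (p : Fin n → ℝ)
    (s : Fin (N + 1) → Fin n) :
    trajProb P p (N + 1) s = p (s 0) * ∏ k : Fin N, P (s k.castSucc) (s k.succ) := by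
  rw [trajProb, dif_pos (Nat.succ_pos N)]
  rfl

lemma trajProb_snoc {n N : ℕ} (P : Matrix (Fin n) (Fin n) ℝ) (p : Fin n → ℝ)
    (s : Fin (N + 1) → Fin n) (j : Fin n) :
    trajProb P p (N + 2) (Fin.snoc s j) =
      trajProb P p (N + 1) s * P (s (Fin.last N)) j := by
  rw [trajProb_succ, trajProb_succ, Fin.prod_univ_castSucc]
  have h0 : (Fin.snoc s j : Fin (N + 2) → Fin n) 0 = s 0 := by
    rw [show (0 : Fin (N + 2)) = Fin.castSucc 0 from rfl, Fin.snoc_castSucc]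
  simp only [h0, Fin.succ_castSucc, Fin.snoc_castSucc, Fin.snoc_last, Fin.succ_last]
  ring

lemma trajProb_pos {n N : ℕ} {P : Matrix (Fin n) (Fin n) ℝ} {p : Fin n → ℝ}
    (hP : ∀ i j, 0 < P i j) (hp : ∀ i, 0 < p i) (s : Fin (N + 1) → Fin n) :
    0 < trajProb P p (N + 1) s := by
  rw [trajProb_succ]
  exact mul_pos (hp _) (Finset.prod_pos fun k _ => hP _ _)

lemma traj_marginal {n N : ℕ} (P : Matrix (Fin n) (Fin n) ℝ)
    (hProw : ∀ i, ∑ j, P i j = 1) (p : Fin n → ℝ) (f : Fin n → ℝ) :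
    ∑ s : Fin (N + 1) → Fin n, trajProb P p (N + 1) s * f (s (Fin.last N))
      = Matrix.vecMul p (P ^ N) ⬝ᵥ f := by
  induction N generalizing f with
  | zero =>
    rw [← Equiv.sum_comp (Equiv.funUnique (Fin 1) (Fin n)).symm]
    simp [trajProb_succ, dotProduct, Equiv.funUnique]
  | succ N ih =>
    rw [← Equiv.sum_comp (Fin.snocEquiv (fun _ => Fin n)), Fintype.sum_prod_type]
    have heq : ∀ (x : Fin n) (y : Fin (N + 1) → Fin n),
        ((Fin.snocEquiv fun _ => Fin n) (x, y)) = Fin.snoc y x := fun _ _ => rfl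
    simp only [heq, Fin.snoc_last, trajProb_snoc]
    rw [Finset.sum_comm]
    have : ∀ s : Fin (N + 1) → Fin n,
        ∑ j, trajProb P p (N + 1) s * P (s (Fin.last N)) j * f j
          = trajProb P p (N + 1) s * (P.mulVec f) (s (Fin.last N)) := by
      intro s
      simp [Matrix.mulVec, dotProduct, Finset.mul_sum, mul_assoc]
    rw [Finset.sum_congr rfl fun s _ => this s, ih (P.mulVec f),
      Matrix.dotProduct_mulVec, Matrix.vecMul_vecMul, ← pow_succ]

lemma kl_main {n N : ℕ} (P Q : Matrix (Fin n) (Fin n) ℝ)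
    (hPpos : ∀ i j, 0 < P i j) (hQpos : ∀ i j, 0 < Q i j)
    (hProw : ∀ i, ∑ j, P i j = 1) (p : Fin n → ℝ) (hp : ∀ i, 0 < p i) :
    ∑ s : Fin (N + 1) → Fin n,
        trajProb P p (N + 1) s
          * Real.log (trajProb P p (N + 1) s / trajProb Q p (N + 1) s)
      = p ⬝ᵥ ((∑ k ∈ Finset.range N, P ^ k).mulVec
          (fun i => ∑ j, P i j * Real.log (P i j / Q i j))) := by
  induction N with
  | zero =>
    have hlog : ∀ s : Fin 1 → Fin n,
        Real.log (trajProb P p 1 s / trajProb Q p 1 s) = 0 := by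
      intro s
      rw [trajProb_succ, trajProb_succ]
      simp [div_self (ne_of_gt (hp (s 0)))]
    simp [hlog]
  | succ N ih =>
    set V : Fin n → ℝ := fun i => ∑ j, P i j * Real.log (P i j / Q i j) with hV
    rw [← Equiv.sum_comp (Fin.snocEquiv (fun _ => Fin n)), Fintype.sum_prod_type]
    have heq : ∀ (x : Fin n) (y : Fin (N + 1) → Fin n),
        ((Fin.snocEquiv fun _ => Fin n) (x, y)) = Fin.snoc y x := fun _ _ => rfl
    simp only [heq, trajProb_snoc]
    rw [Finset.sum_comm]
    have key : ∀ (s : Fin (N + 1) → Fin n),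
        ∑ j, trajProb P p (N + 1) s * P (s (Fin.last N)) j
            * Real.log (trajProb P p (N + 1) s * P (s (Fin.last N)) j
              / (trajProb Q p (N + 1) s * Q (s (Fin.last N)) j))
          = trajProb P p (N + 1) s
              * Real.log (trajProb P p (N + 1) s / trajProb Q p (N + 1) s)
            + trajProb P p (N + 1) s * V (s (Fin.last N)) := by
      intro s
      have hPs := trajProb_pos hPpos hp (P := P) (p := p) s
      have hQs := trajProb_pos hQpos hp (P := Q) (p := p) s
      have hsplit : ∀ j : Fin n,
          Real.log (trajProb P p (N + 1) s * P (s (Fin.last N)) j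
              / (trajProb Q p (N + 1) s * Q (s (Fin.last N)) j))
            = Real.log (trajProb P p (N + 1) s / trajProb Q p (N + 1) s)
              + Real.log (P (s (Fin.last N)) j / Q (s (Fin.last N)) j) := by
        intro j
        rw [mul_div_mul_comm, Real.log_mul
          (ne_of_gt (div_pos hPs hQs))
          (ne_of_gt (div_pos (hPpos _ _) (hQpos _ _)))]
      simp only [hsplit, mul_add, Finset.sum_add_distrib]
      congr 1
      · rw [← Finset.sum_mul, ← Finset.mul_sum]
        rw [hProw (s (Fin.last N))]
        ring
      · rw [hV, Finset.mul_sum]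
        congr 1
        ext j
        ring
    rw [Finset.sum_congr rfl fun s _ => key s, Finset.sum_add_distrib, ih,
      traj_marginal P hProw p V, Finset.sum_range_succ, Matrix.add_mulVec,
      dotProduct_add, Matrix.dotProduct_mulVec, Matrix.dotProduct_mulVec]
/-- Chain rule for the KL divergence between trajectory distributions of two
Markov chains with positive row-stochastic matrices `P, Q` and uniform initial
distributions `p = q`:
`D(p^{(m)}‖q^{(m)}) = p (I + P + ⋯ + P^{m-2}) V + D(p‖q)`,
where `Vᵢ = D(P(i)‖Q(i))`. -/
theorem stmt_10 (n m : ℕ) (hn : 0 < n) (hm : 1 ≤ m)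
    (P Q : Matrix (Fin n) (Fin n) ℝ)
    (hPpos : ∀ i j, 0 < P i j) (hQpos : ∀ i j, 0 < Q i j)
    (hProw : ∀ i, ∑ j, P i j = 1) (hQrow : ∀ i, ∑ j, Q i j = 1)
    (p : Fin n → ℝ) (hp : ∀ i, p i = 1 / n) :
    ∑ s : Fin m → Fin n,
        trajProb P p m s * Real.log (trajProb P p m s / trajProb Q p m s)
      = p ⬝ᵥ ((∑ k ∈ Finset.range (m - 1), P ^ k).mulVec
          (fun i => ∑ j, P i j * Real.log (P i j / Q i j)))
        + ∑ i, p i * Real.log (p i / p i) := by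
  obtain ⟨N, rfl⟩ : ∃ N, m = N + 1 := ⟨m - 1, (Nat.succ_pred_eq_of_pos hm).symm⟩
  have hppos : ∀ i, 0 < p i := by
    intro i
    rw [hp i]
    positivity
  have hzero : ∑ i, p i * Real.log (p i / p i) = 0 := by
    apply Finset.sum_eq_zero
    intro i _
    rw [div_self (ne_of_gt (hppos i)), Real.log_one, mul_zero]
  rw [hzero, add_zero, Nat.add_sub_cancel]
  exact kl_main P Q hPpos hQpos hProw p hppos
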